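/- arXiv:1508.05476 — 5 statements merged into one kernel-verified Lean document; each statement's English description precedes it below -/
import Mathlib

section
/- Let ℓ* ∈ [K]^p be an optimal vector of reference strata, i.e., β*_{ℓ*_j,j} = β̄*_j for all j ∈ [p]. Then: (i) the submatrix of X_{ℓ*} formed by the columns indexed by J_{ℓ*} coincides (as a matrix, under the natural correspondence of indices) with the submatrix of X₀ formed by the columns indexed by J₀, and correspondingly θ*_{ℓ*} restricted to J_{ℓ*} equals θ*_0 restricted to J₀; consequently Λ_min(X_{ℓ*,J_{ℓ*}}ᵀX_{ℓ*,J_{ℓ*}}) = Λ_min(X_{0,J₀}ᵀX_{0,J₀}); (ii) |J₀ᶜ| = p + |J_{ℓ*}ᶜ|, where J₀ᶜ ⊆ [(K+1)p] and J_{ℓ*}ᶜ ⊆ [Kp] are the complements of the supports. -/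
open scoped BigOperators Matrix
open Classical MeasureTheory ProbabilityTheory

noncomputable section

/-- The ℓ₁ norm of a finitely supported real vector. -/
def l1 {ι : Type*} [Fintype ι] (x : ι → ℝ) : ℝ := ∑ i, |x i|

/-- The squared ℓ₂ norm. -/
def l2sq {ι : Type*} [Fintype ι] (x : ι → ℝ) : ℝ := ∑ i, (x i) ^ 2

/-- The ℓ₂ norm. -/
def l2 {ι : Type*} [Fintype ι] (x : ι → ℝ) : ℝ := Real.sqrt (l2sq x)

/-- The ℓ∞ norm. -/
def linf {ι : Type*} (x : ι → ℝ) : ℝ := sSup (Set.range fun i => |x i|)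

/-- Smallest eigenvalue (= smallest singular value, for the symmetric PSD
matrices considered here). -/
def lamMin {ι : Type*} [Fintype ι] (M : Matrix ι ι ℝ) : ℝ :=
  sInf {r : ℝ | ∃ x : ι → ℝ, x ≠ 0 ∧ M.mulVec x = r • x}

/-- Gram matrix of the columns of `M` indexed by the support of `θ`. -/
def gramOn {ι κ : Type*} [Fintype ι] (M : Matrix ι κ ℝ) (θ : κ → ℝ) :
    Matrix {c // θ c ≠ 0} {c // θ c ≠ 0} ℝ :=
  fun a b => ∑ r, M r a.val * M r b.val

/-- ‖(M_J^T M_J)⁻¹ M_J^T M_j‖₁ for a column index `j` (J = support of θ). -/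
def icVal {ι κ : Type*} [Fintype ι] [Fintype κ] [DecidableEq κ]
    (M : Matrix ι κ ℝ) (θ : κ → ℝ) (j : κ) : ℝ :=
  l1 ((gramOn M θ)⁻¹.mulVec fun a : {c // θ c ≠ 0} => ∑ r, M r a.val * M r j)

/-- max over j outside the support of θ of `icVal`. -/
def icSup {ι κ : Type*} [Fintype ι] [Fintype κ] [DecidableEq κ]
    (M : Matrix ι κ ℝ) (θ : κ → ℝ) : ℝ :=
  sSup {x : ℝ | ∃ j, θ j = 0 ∧ x = icVal M θ j}

/-- The design matrix 𝒳₀ of the overparametrized (proposed) approach. -/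
def X0 {K p : ℕ} (nk : Fin K → ℕ) (X : (k : Fin K) → Matrix (Fin (nk k)) (Fin p) ℝ)
    (τ : Fin K → ℝ) : Matrix ((k : Fin K) × Fin (nk k)) (Fin p ⊕ Fin K × Fin p) ℝ :=
  fun r c => Sum.elim (fun j => X r.1 r.2 j)
    (fun q => if r.1 = q.1 then X r.1 r.2 q.2 / τ q.1 else 0) c

/-- The parameter vector θ*₀ = (β̄*ᵀ, τ₁(β*₁-β̄*)ᵀ, …, τ_K(β*_K-β̄*)ᵀ)ᵀ. -/
def theta0 {K p : ℕ} (β : Fin K → Fin p → ℝ) (βbar : Fin p → ℝ) (τ : Fin K → ℝ) :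
    (Fin p ⊕ Fin K × Fin p) → ℝ :=
  Sum.elim βbar fun q => τ q.1 * (β q.1 q.2 - βbar q.2)

/-- The design matrix 𝒳_ℓ of the basic approach with reference strata ℓ. -/
def Xl {K p : ℕ} (nk : Fin K → ℕ) (X : (k : Fin K) → Matrix (Fin (nk k)) (Fin p) ℝ)
    (τ : Fin K → ℝ) (ℓ : Fin p → Fin K) :
    Matrix ((k : Fin K) × Fin (nk k)) (Fin p ⊕ {q : Fin K × Fin p // ℓ q.2 ≠ q.1}) ℝ :=
  fun r c => Sum.elim (fun j => X r.1 r.2 j)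
    (fun q => if r.1 = q.val.1 then X r.1 r.2 q.val.2 / τ q.val.1 else 0) c

/-- The parameter vector θ*_ℓ of the basic approach with reference strata ℓ. -/
def thetal {K p : ℕ} (β : Fin K → Fin p → ℝ) (τ : Fin K → ℝ) (ℓ : Fin p → Fin K) :
    (Fin p ⊕ {q : Fin K × Fin p // ℓ q.2 ≠ q.1}) → ℝ :=
  Sum.elim (fun j => β (ℓ j) j)
    fun q => τ q.val.1 * (β q.val.1 q.val.2 - β (ℓ q.val.2) q.val.2)

/-- Multiplicity of the value `v` in the collection (0, β_{1,j}, …, β_{K,j}). -/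
def modeCount {K p : ℕ} (β : Fin K → Fin p → ℝ) (j : Fin p) (v : ℝ) : ℕ :=
  (if v = 0 then 1 else 0) + Nat.card {k : Fin K // β k j = v}

/-- `βbar j` is the unique mode of (0, β_{1,j}, …, β_{K,j}) for every j. -/
def IsUniqueMode {K p : ℕ} (β : Fin K → Fin p → ℝ) (βbar : Fin p → ℝ) : Prop :=
  ∀ j v, v ≠ βbar j → modeCount β j v < modeCount β j (βbar j)

/-- Lasso objective (1/(2n))‖Y − Mθ‖₂² + λ₁‖θ‖₁. -/
def lassoObj {ι κ : Type*} [Fintype ι] [Fintype κ] (n : ℕ) (M : Matrix ι κ ℝ)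
    (Y : ι → ℝ) (lam1 : ℝ) (θ : κ → ℝ) : ℝ :=
  (1 / (2 * (n : ℝ))) * l2sq (fun r => Y r - M.mulVec θ r) + lam1 * l1 θ


/-
With the optimal reference strata, `μ*_{ℓ*} = β̄*`, so θ*_{ℓ*} is θ*₀ read through the column
embedding `Sum.map id Subtype.val`, and 𝒳_{ℓ*} is 𝒳₀ with the same columns. The only columns of
𝒳₀ missing from 𝒳_{ℓ*} are the `p` reference columns `(ℓ*_j, j)`, on which θ*₀ vanishes. Hence
the supports correspond bijectively, the Gram matrices on the supports agree up to a relabelling,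
and θ*₀ has exactly `p` more zeros than θ*_{ℓ*}.
-/

lemma lamMin_submatrix_equiv {α β : Type*} [Fintype α] [Fintype β]
    (M : Matrix α α ℝ) (e : β ≃ α) : lamMin (M.submatrix e e) = lamMin M := by
  unfold lamMin
  congr 1
  ext r
  constructor
  · rintro ⟨x, hx, h⟩
    refine ⟨x ∘ e.symm, fun h0 => hx (funext fun i => ?_), funext fun a => ?_⟩
    · simpa using congrFun h0 (e i)
    · rw [Matrix.submatrix_mulVec_equiv] at h
      simpa using congrFun h (e.symm a)
  · rintro ⟨y, hy, h⟩
    refine ⟨y ∘ e, fun h0 => hy (funext fun i => ?_), funext fun b => ?_⟩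
    · simpa using congrFun h0 (e.symm i)
    · rw [Matrix.submatrix_mulVec_equiv, Function.comp_assoc, e.self_comp_symm,
        Function.comp_id]
      simpa using congrFun h (e b)

section ColumnEmbedding

variable {ι κ κ' : Type*} {f : κ' → κ}

lemma bijOn_support_comp {M : Type*} [Zero M] (hf : f.Injective) {θ : κ → M}
    (hθ : Function.support θ ⊆ Set.range f) :
    Set.BijOn f {c | θ (f c) ≠ 0} {c | θ c ≠ 0} := by
  have h := hf.injOn.bijOn_image (s := f ⁻¹' Function.support θ)
  rwa [Set.image_preimage_eq_of_subset hθ] at h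

lemma lamMin_gramOn_submatrix [Fintype ι] [Fintype κ] [Fintype κ'] (hf : f.Injective)
    (M : Matrix ι κ ℝ) {θ : κ → ℝ} (hθ : Function.support θ ⊆ Set.range f) :
    lamMin (gramOn (M.submatrix id f) (θ ∘ f)) = lamMin (gramOn M θ) := by
  let e := (bijOn_support_comp hf hθ).equiv
  have hgram : gramOn (M.submatrix id f) (θ ∘ f) = (gramOn M θ).submatrix e e := rfl
  rw [hgram, lamMin_submatrix_equiv]

lemma card_zeros_add_card_eq [Finite κ] {M : Type*} [Zero M] (hf : f.Injective) {θ : κ → M}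
    (hθ : Function.support θ ⊆ Set.range f) :
    Nat.card {c // θ c = 0} + Nat.card κ' = Nat.card {c // θ (f c) = 0} + Nat.card κ := by
  have : Finite κ' := Finite.of_injective f hf
  have hsupp := Set.ncard_preimage_of_injective_subset_range hf hθ
  have hκ := Set.ncard_add_ncard_compl (Function.support θ)
  have hκ' := Set.ncard_add_ncard_compl (f ⁻¹' Function.support θ)
  rw [← Set.preimage_compl, Function.compl_support] at hκ'
  rw [Function.compl_support] at hκ
  change {c | θ c = 0}.ncard + _ = (f ⁻¹' {c | θ c = 0}).ncard + _
  omega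

end ColumnEmbedding

section ReferenceStrata

variable {K p : ℕ} (ℓ : Fin p → Fin K)

abbrev refColumnEmbedding : Fin p ⊕ {q : Fin K × Fin p // ℓ q.2 ≠ q.1} → Fin p ⊕ Fin K × Fin p :=
  Sum.map id Subtype.val

lemma refColumnEmbedding_injective : (refColumnEmbedding ℓ).Injective :=
  Function.injective_id.sumMap Subtype.val_injective

lemma Xl_eq_submatrix {nk : Fin K → ℕ} (X : (k : Fin K) → Matrix (Fin (nk k)) (Fin p) ℝ)
    (τ : Fin K → ℝ) : Xl nk X τ ℓ = (X0 nk X τ).submatrix id (refColumnEmbedding ℓ) := by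
  ext r (j | q) <;> rfl

lemma card_nonReference_add_eq :
    Nat.card {q : Fin K × Fin p // ℓ q.2 ≠ q.1} + p = K * p := by
  have hgraph : {q : Fin K × Fin p // ℓ q.2 = q.1} ≃ Fin p :=
    { toFun := fun q => q.val.2
      invFun := fun j => ⟨(ℓ j, j), rfl⟩
      left_inv := fun ⟨⟨_, _⟩, h⟩ => Subtype.ext (Prod.ext h rfl)
      right_inv := fun _ => rfl }
  have hsplit := Nat.card_congr (Equiv.sumCompl fun q : Fin K × Fin p => ℓ q.2 = q.1)
  rw [Nat.card_sum, Nat.card_congr hgraph, Nat.card_prod, Nat.card_fin, Nat.card_fin] at hsplit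
  exact (add_comm _ _).trans hsplit

variable {ℓ} {β : Fin K → Fin p → ℝ} {βbar : Fin p → ℝ} (τ : Fin K → ℝ)

lemma thetal_eq_theta0_comp (hℓ : ∀ j, β (ℓ j) j = βbar j) :
    thetal β τ ℓ = theta0 β βbar τ ∘ refColumnEmbedding ℓ := by
  ext (j | q) <;> simp [thetal, theta0, hℓ]

lemma support_theta0_subset_range (hℓ : ∀ j, β (ℓ j) j = βbar j) :
    Function.support (theta0 β βbar τ) ⊆ Set.range (refColumnEmbedding ℓ) := by
  rintro (j | ⟨k, j⟩) hc
  · exact ⟨Sum.inl j, rfl⟩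
  · have hk : ℓ j ≠ k := by
      rintro rfl
      simp [theta0, hℓ] at hc
    exact ⟨Sum.inr ⟨(k, j), hk⟩, rfl⟩

end ReferenceStrata

theorem statement_11_general {K p : ℕ}
    (nk : Fin K → ℕ)
    (X : (k : Fin K) → Matrix (Fin (nk k)) (Fin p) ℝ)
    (β : Fin K → Fin p → ℝ) (βbar : Fin p → ℝ)
    (ℓs : Fin p → Fin K) (hℓs : ∀ j, β (ℓs j) j = βbar j)
    (τ : Fin K → ℝ) :
    (∀ c : Fin p ⊕ {q : Fin K × Fin p // ℓs q.2 ≠ q.1},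
        thetal β τ ℓs c = theta0 β βbar τ (Sum.map id Subtype.val c))
    ∧ (∀ (r : (k : Fin K) × Fin (nk k))
        (c : Fin p ⊕ {q : Fin K × Fin p // ℓs q.2 ≠ q.1}),
        Xl nk X τ ℓs r c = X0 nk X τ r (Sum.map id Subtype.val c))
    ∧ Set.BijOn (Sum.map id Subtype.val)
        {c | thetal β τ ℓs c ≠ 0} {c | theta0 β βbar τ c ≠ 0}
    ∧ lamMin (gramOn (Xl nk X τ ℓs) (thetal β τ ℓs))
        = lamMin (gramOn (X0 nk X τ) (theta0 β βbar τ))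
    ∧ Nat.card {c : Fin p ⊕ Fin K × Fin p // theta0 β βbar τ c = 0}
        = p + Nat.card {c : Fin p ⊕ {q : Fin K × Fin p // ℓs q.2 ≠ q.1} //
            thetal β τ ℓs c = 0} := by
  have hinj := refColumnEmbedding_injective ℓs
  have hθ := thetal_eq_theta0_comp τ hℓs
  have hsupp := support_theta0_subset_range τ hℓs
  refine ⟨congrFun hθ, fun r c => by rw [Xl_eq_submatrix]; rfl, ?_, ?_, ?_⟩
  · rw [hθ]
    exact bijOn_support_comp hinj hsupp
  · rw [hθ, Xl_eq_submatrix]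
    exact lamMin_gramOn_submatrix hinj _ hsupp
  · have hcount := card_zeros_add_card_eq hinj hsupp
    have hcols := card_nonReference_add_eq ℓs
    rw [Nat.card_sum, Nat.card_sum, Nat.card_prod, Nat.card_fin, Nat.card_fin] at hcount
    simp only [hθ, Function.comp_apply]
    omega

/-- with an optimal vector of reference strata ℓ*, the columns of
𝒳_{ℓ*} indexed by J_{ℓ*} coincide, under the natural correspondence of
indices, with the columns of 𝒳₀ indexed by J₀ (and likewise for θ*), so the
smallest singular values of the two Gram matrices coincide; moreover
|J₀ᶜ| = p + |J_{ℓ*}ᶜ|. -/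
theorem statement_11 {K p : ℕ}
    (nk : Fin K → ℕ) (n : ℕ) (hn : n = ∑ k, nk k)
    (X : (k : Fin K) → Matrix (Fin (nk k)) (Fin p) ℝ)
    (β : Fin K → Fin p → ℝ) (βbar : Fin p → ℝ) (hmode : IsUniqueMode β βbar)
    (ℓs : Fin p → Fin K) (hℓs : ∀ j, β (ℓs j) j = βbar j)
    (τ : Fin K → ℝ) (hτ : ∀ k, 0 < τ k) :
    (∀ c : Fin p ⊕ {q : Fin K × Fin p // ℓs q.2 ≠ q.1},
        thetal β τ ℓs c = theta0 β βbar τ (Sum.map id Subtype.val c))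
    ∧ (∀ (r : (k : Fin K) × Fin (nk k))
        (c : Fin p ⊕ {q : Fin K × Fin p // ℓs q.2 ≠ q.1}),
        Xl nk X τ ℓs r c = X0 nk X τ r (Sum.map id Subtype.val c))
    ∧ Set.BijOn (Sum.map id Subtype.val)
        {c | thetal β τ ℓs c ≠ 0} {c | theta0 β βbar τ c ≠ 0}
    ∧ lamMin (gramOn (Xl nk X τ ℓs) (thetal β τ ℓs))
        = lamMin (gramOn (X0 nk X τ) (theta0 β βbar τ))
    ∧ Nat.card {c : Fin p ⊕ Fin K × Fin p // theta0 β βbar τ c = 0}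
        = p + Nat.card {c : Fin p ⊕ {q : Fin K × Fin p // ℓs q.2 ≠ q.1} //
            thetal β τ ℓs c = 0} :=
  statement_11_general nk X β βbar ℓs hℓs τ

end
end

section
/- Fix a vector of reference strata ℓ ∈ [K]^p, λ₁ > 0 and τ₁,…,τ_K > 0, and set λ_{2,k} = τ_k·λ₁. Then for every μ ∈ ℝ^p and δ₁,…,δ_K ∈ ℝ^p with δ_{ℓ_j,j} = 0 for all j ∈ [p], Σ_{k=1}^K ‖y^{(k)} − X^{(k)}(μ + δ_k)‖₂²/(2n) + λ₁‖μ‖₁ + Σ_{k=1}^K λ_{2,k}‖δ_k‖₁ = (1/(2n))‖Y − X_ℓθ‖₂² + λ₁‖θ‖₁, where θ ∈ ℝ^{Kp} is the vector whose first p components are μ and whose k-th subsequent block is τ_k·(δ_{k,j})_{j∈P^{(k)}_ℓ}. Consequently, (μ̂, δ̂₁,…,δ̂_K) minimizes the constrained criterion if and only if the corresponding θ̂ minimizes the lasso criterion θ ↦ (1/(2n))‖Y − X_ℓθ‖₂² + λ₁‖θ‖₁ over ℝ^{Kp}. -/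
open scoped BigOperators Matrix
open Classical MeasureTheory ProbabilityTheory

noncomputable section

/-- the criterion of the basic approach with reference strata ℓ
rewrites as a lasso on the transformed design matrix 𝒳_ℓ, and minimizers
correspond. -/
theorem statement_13 {K p : ℕ} (nk : Fin K → ℕ) (n : ℕ) (hn : n = ∑ k, nk k)
    (X : (k : Fin K) → Matrix (Fin (nk k)) (Fin p) ℝ)
    (y : (k : Fin K) → Fin (nk k) → ℝ)
    (ℓ : Fin p → Fin K)
    (τ : Fin K → ℝ) (hτ : ∀ k, 0 < τ k)
    (lam1 : ℝ) (hlam1 : 0 < lam1)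
    (lam2 : Fin K → ℝ) (hlam2 : ∀ k, lam2 k = τ k * lam1) :
    (∀ (μ : Fin p → ℝ) (δ : Fin K → Fin p → ℝ), (∀ j, δ (ℓ j) j = 0) →
      (∑ k, l2sq (fun i => y k i - (X k).mulVec (μ + δ k) i) / (2 * (n : ℝ))
          + lam1 * l1 μ + ∑ k, lam2 k * l1 (δ k))
        = lassoObj n (Xl nk X τ ℓ) (fun r => y r.1 r.2) lam1
            (Sum.elim μ fun q => τ q.val.1 * δ q.val.1 q.val.2))
    ∧ (∀ (μh : Fin p → ℝ) (δh : Fin K → Fin p → ℝ), (∀ j, δh (ℓ j) j = 0) →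
        ((∀ (μ' : Fin p → ℝ) (δ' : Fin K → Fin p → ℝ), (∀ j, δ' (ℓ j) j = 0) →
          (∑ k, l2sq (fun i => y k i - (X k).mulVec (μh + δh k) i) / (2 * (n : ℝ))
              + lam1 * l1 μh + ∑ k, lam2 k * l1 (δh k))
            ≤ (∑ k, l2sq (fun i => y k i - (X k).mulVec (μ' + δ' k) i) / (2 * (n : ℝ))
              + lam1 * l1 μ' + ∑ k, lam2 k * l1 (δ' k)))
        ↔ (∀ θ' : (Fin p ⊕ {q : Fin K × Fin p // ℓ q.2 ≠ q.1}) → ℝ,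
            lassoObj n (Xl nk X τ ℓ) (fun r => y r.1 r.2) lam1
              (Sum.elim μh fun q => τ q.val.1 * δh q.val.1 q.val.2)
            ≤ lassoObj n (Xl nk X τ ℓ) (fun r => y r.1 r.2) lam1 θ'))) := by
  have hτne : ∀ k, τ k ≠ 0 := fun k => (hτ k).ne'
  have key : ∀ (μ : Fin p → ℝ) (δ : Fin K → Fin p → ℝ), (∀ j, δ (ℓ j) j = 0) →
      (∑ k, l2sq (fun i => y k i - (X k).mulVec (μ + δ k) i) / (2 * (n : ℝ))
          + lam1 * l1 μ + ∑ k, lam2 k * l1 (δ k))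
        = lassoObj n (Xl nk X τ ℓ) (fun r => y r.1 r.2) lam1
            (Sum.elim μ fun q => τ q.val.1 * δ q.val.1 q.val.2) := by
    intro μ δ hδ
    have hmv : ∀ (k : Fin K) (i : Fin (nk k)),
        (Xl nk X τ ℓ).mulVec (Sum.elim μ fun q => τ q.val.1 * δ q.val.1 q.val.2) ⟨k, i⟩
          = (X k).mulVec (μ + δ k) i := by
      intro k i
      simp only [Matrix.mulVec, dotProduct, Xl, Fintype.sum_sum_type, Sum.elim_inl,
        Sum.elim_inr]
      have h2 : (∑ q : {q : Fin K × Fin p // ℓ q.2 ≠ q.1},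
            (if k = q.val.1 then X k i q.val.2 / τ q.val.1 else 0)
              * (τ q.val.1 * δ q.val.1 q.val.2))
          = ∑ j, X k i j * δ k j := by
        have hsub : (∑ q : {q : Fin K × Fin p // ℓ q.2 ≠ q.1},
              (if k = q.val.1 then X k i q.val.2 / τ q.val.1 else 0)
                * (τ q.val.1 * δ q.val.1 q.val.2))
            = ∑ q ∈ Finset.univ.filter (fun q : Fin K × Fin p => ℓ q.2 ≠ q.1),
              (if k = q.1 then X k i q.2 / τ q.1 else 0) * (τ q.1 * δ q.1 q.2) := by
          rw [Finset.sum_subtype (p := fun q : Fin K × Fin p => ℓ q.2 ≠ q.1)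
            (Finset.univ.filter (fun q : Fin K × Fin p => ℓ q.2 ≠ q.1))
            (by simp) (fun q : Fin K × Fin p =>
              (if k = q.1 then X k i q.2 / τ q.1 else 0) * (τ q.1 * δ q.1 q.2))]
        rw [hsub, Finset.sum_filter]
        have hq : ∀ q : Fin K × Fin p,
            (if ℓ q.2 ≠ q.1 then
              (if k = q.1 then X k i q.2 / τ q.1 else 0) * (τ q.1 * δ q.1 q.2) else 0)
            = if k = q.1 then X k i q.2 * δ q.1 q.2 else 0 := by
          intro q
          by_cases hk : k = q.1
          · by_cases hl : ℓ q.2 ≠ q.1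
            · rw [if_pos hl, ← hk, if_pos rfl, div_mul_eq_mul_div, mul_div_assoc,
                mul_div_cancel_left₀ _ (hτne k), if_pos rfl]
            · push_neg at hl
              have hz : δ q.1 q.2 = 0 := by rw [← hl]; exact hδ q.2
              simp [hk, hl, hz]
          · simp [hk]
        rw [Finset.sum_congr rfl (fun q _ => hq q), Fintype.sum_prod_type]
        simp [Finset.sum_ite_eq, mul_comm]
      rw [h2]
      simp [Matrix.mulVec, dotProduct, Pi.add_apply, mul_add, Finset.sum_add_distrib]
    have hl1 : l1 (Sum.elim μ fun q : {q : Fin K × Fin p // ℓ q.2 ≠ q.1} =>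
          τ q.val.1 * δ q.val.1 q.val.2)
        = l1 μ + ∑ k, τ k * l1 (δ k) := by
      simp only [l1, Fintype.sum_sum_type, Sum.elim_inl, Sum.elim_inr]
      congr 1
      have hsub : (∑ q : {q : Fin K × Fin p // ℓ q.2 ≠ q.1}, |τ q.val.1 * δ q.val.1 q.val.2|)
          = ∑ q ∈ Finset.univ.filter (fun q : Fin K × Fin p => ℓ q.2 ≠ q.1),
            |τ q.1 * δ q.1 q.2| := by
        rw [Finset.sum_subtype (p := fun q : Fin K × Fin p => ℓ q.2 ≠ q.1)
          (Finset.univ.filter (fun q : Fin K × Fin p => ℓ q.2 ≠ q.1))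
          (by simp) (fun q : Fin K × Fin p => |τ q.1 * δ q.1 q.2|)]
      rw [hsub, Finset.sum_filter]
      have hq : ∀ q : Fin K × Fin p,
          (if ℓ q.2 ≠ q.1 then |τ q.1 * δ q.1 q.2| else 0) = |τ q.1 * δ q.1 q.2| := by
        intro q
        by_cases hl : ℓ q.2 ≠ q.1
        · simp [hl]
        · push_neg at hl
          have hz : δ q.1 q.2 = 0 := by rw [← hl]; exact hδ q.2
          simp [hz]
      rw [Finset.sum_congr rfl (fun q _ => hq q), Fintype.sum_prod_type]
      refine Finset.sum_congr rfl fun k _ => ?_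
      rw [Finset.mul_sum]
      refine Finset.sum_congr rfl fun j _ => ?_
      rw [abs_mul, abs_of_pos (hτ k)]
    have hl2 : l2sq (fun r : (k : Fin K) × Fin (nk k) =>
          (fun r : (k : Fin K) × Fin (nk k) => y r.1 r.2) r
            - (Xl nk X τ ℓ).mulVec (Sum.elim μ fun q => τ q.val.1 * δ q.val.1 q.val.2) r)
        = ∑ k, l2sq (fun i => y k i - (X k).mulVec (μ + δ k) i) := by
      simp only [l2sq]
      rw [← Finset.univ_sigma_univ, Finset.sum_sigma]
      exact Finset.sum_congr rfl fun k _ => Finset.sum_congr rfl fun i _ => by rw [hmv k i]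
    have hs : ∑ k, lam2 k * l1 (δ k) = lam1 * ∑ k, τ k * l1 (δ k) := by
      rw [Finset.mul_sum]
      exact Finset.sum_congr rfl fun k _ => by rw [hlam2 k]; ring
    rw [lassoObj, hl2, hl1, hs, ← Finset.sum_div]
    ring
  refine ⟨key, ?_⟩
  intro μh δh hδh
  constructor
  · intro hmin θ'
    set μ' : Fin p → ℝ := fun j => θ' (Sum.inl j) with hμ'
    set δ' : Fin K → Fin p → ℝ := fun k j =>
      if h : ℓ j ≠ k then θ' (Sum.inr ⟨(k, j), h⟩) / τ k else 0 with hδ'def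
    have hδ' : ∀ j, δ' (ℓ j) j = 0 := by
      intro j; simp [hδ'def]
    have hθ' : (Sum.elim μ' fun q : {q : Fin K × Fin p // ℓ q.2 ≠ q.1} =>
        τ q.val.1 * δ' q.val.1 q.val.2) = θ' := by
      funext c
      cases c with
      | inl j => rfl
      | inr q =>
        simp only [Sum.elim_inr, hδ'def]
        rw [dif_pos q.2]
        have hq : (⟨(q.val.1, q.val.2), q.2⟩ : {q : Fin K × Fin p // ℓ q.2 ≠ q.1}) = q := by
          apply Subtype.ext; rfl
        rw [hq, mul_div_cancel₀ _ (hτne q.val.1)]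
    calc lassoObj n (Xl nk X τ ℓ) (fun r => y r.1 r.2) lam1
          (Sum.elim μh fun q => τ q.val.1 * δh q.val.1 q.val.2)
        = _ := (key μh δh hδh).symm
      _ ≤ _ := hmin μ' δ' hδ'
      _ = lassoObj n (Xl nk X τ ℓ) (fun r => y r.1 r.2) lam1 θ' := by
          rw [key μ' δ' hδ', hθ']
  · intro hmin μ' δ' hδ'
    calc (∑ k, l2sq (fun i => y k i - (X k).mulVec (μh + δh k) i) / (2 * (n : ℝ))
          + lam1 * l1 μh + ∑ k, lam2 k * l1 (δh k))
        = _ := key μh δh hδh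
      _ ≤ lassoObj n (Xl nk X τ ℓ) (fun r => y r.1 r.2) lam1
            (Sum.elim μ' fun q => τ q.val.1 * δ' q.val.1 q.val.2) := hmin _
      _ = _ := (key μ' δ' hδ').symm

end
end

section
/- Fix λ₁ > 0 and τ₁,…,τ_K > 0 and set λ_{2,k} = τ_k·λ₁. Suppose (μ̂, γ̂₁,…,γ̂_K) ∈ (ℝ^p)^{K+1} minimizes the criterion F(μ, γ₁,…,γ_K) = Σ_{k=1}^K ‖y^{(k)} − X^{(k)}(μ + γ_k)‖₂²/(2n) + λ₁‖μ‖₁ + Σ_{k=1}^K λ_{2,k}‖γ_k‖₁. Set β̂_k = μ̂ + γ̂_k for each k. Then for every j ∈ [p], μ̂_j is a minimizer over b ∈ ℝ of the function b ↦ |b| + Σ_{k=1}^K τ_k·|β̂_{k,j} − b|; that is, μ̂_j ∈ WSmedian(β̂_{1,j},…,β̂_{K,j}; τ). -/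
open scoped BigOperators Matrix
open Classical MeasureTheory ProbabilityTheory

noncomputable section

lemma l1_update_add_abs {ι : Type*} [Fintype ι] [DecidableEq ι] (f : ι → ℝ) (j : ι) (v : ℝ) :
    l1 (Function.update f j v) + |f j| = l1 f + |v| := by
  unfold l1
  rw [← Finset.add_sum_erase _ _ (Finset.mem_univ j),
    ← Finset.add_sum_erase _ _ (Finset.mem_univ j), Function.update_self,
    Finset.sum_congr rfl fun i hi => by rw [Function.update_of_ne (Finset.ne_of_mem_erase hi)]]
  ring

lemma sum_mul_l1_update_add {κ ι : Type*} [Fintype κ] [Fintype ι] [DecidableEq ι]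
    (w : κ → ℝ) (g : κ → ι → ℝ) (j : ι) (v : κ → ℝ) :
    ∑ k, w k * l1 (Function.update (g k) j (v k)) + ∑ k, w k * |g k j|
      = ∑ k, w k * l1 (g k) + ∑ k, w k * |v k| := by
  simp only [← Finset.sum_add_distrib, ← mul_add, l1_update_add_abs]

lemma update_add_update_sub {ι G : Type*} [DecidableEq ι] [AddCommGroup G]
    (μ γ : ι → G) (j : ι) (b : G) :
    Function.update μ j b + Function.update γ j (μ j + γ j - b) = μ + γ := by
  rw [← Function.update_add, add_sub_cancel, ← Pi.add_apply, Function.update_eq_self]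

theorem statement_14_general {K p : ℕ} (nk : Fin K → ℕ) (n : ℕ)
    (X : (k : Fin K) → Matrix (Fin (nk k)) (Fin p) ℝ)
    (y : (k : Fin K) → Fin (nk k) → ℝ)
    (τ : Fin K → ℝ)
    (lam1 : ℝ) (hlam1 : 0 < lam1)
    (lam2 : Fin K → ℝ) (hlam2 : ∀ k, lam2 k = τ k * lam1)
    (μh : Fin p → ℝ) (γh : Fin K → Fin p → ℝ)
    (hmin : ∀ (μ' : Fin p → ℝ) (γ' : Fin K → Fin p → ℝ),
      (∑ k, l2sq (fun i => y k i - (X k).mulVec (μh + γh k) i) / (2 * (n : ℝ))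
          + lam1 * l1 μh + ∑ k, lam2 k * l1 (γh k))
        ≤ (∑ k, l2sq (fun i => y k i - (X k).mulVec (μ' + γ' k) i) / (2 * (n : ℝ))
          + lam1 * l1 μ' + ∑ k, lam2 k * l1 (γ' k))) :
    ∀ j : Fin p, ∀ b : ℝ,
      |μh j| + ∑ k, τ k * |(μh j + γh k j) - μh j|
        ≤ |b| + ∑ k, τ k * |(μh j + γh k j) - b| := by
  intro j b
  -- Moving `μ̂_j` to `b` and compensating in every `γ̂_{k,j}` leaves each `β̂_k`, hence the fit, unchanged.
  have hmoved := hmin (Function.update μh j b)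
    fun k => Function.update (γh k) j (μh j + γh k j - b)
  simp only [update_add_update_sub] at hmoved
  have hμ := l1_update_add_abs μh j b
  have hγ := sum_mul_l1_update_add lam2 γh j fun k => μh j + γh k j - b
  have hpenalty : lam1 * |μh j| + ∑ k, lam2 k * |γh k j|
      ≤ lam1 * |b| + ∑ k, lam2 k * |μh j + γh k j - b| := by
    linear_combination hmoved + lam1 * hμ + hγ
  simp only [hlam2, mul_comm (τ _) lam1, mul_assoc, ← Finset.mul_sum, ← mul_add] at hpenalty
  simpa only [add_sub_cancel_left] using le_of_mul_le_mul_left hpenalty hlam1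

/-- at any minimizer of the proposed criterion, the overall
effect μ̂_j is a shrunk τ-weighted median of (β̂_{1,j}, …, β̂_{K,j}). -/
theorem statement_14 {K p : ℕ} (nk : Fin K → ℕ) (n : ℕ) (hn : n = ∑ k, nk k)
    (X : (k : Fin K) → Matrix (Fin (nk k)) (Fin p) ℝ)
    (y : (k : Fin K) → Fin (nk k) → ℝ)
    (τ : Fin K → ℝ) (hτ : ∀ k, 0 < τ k)
    (lam1 : ℝ) (hlam1 : 0 < lam1)
    (lam2 : Fin K → ℝ) (hlam2 : ∀ k, lam2 k = τ k * lam1)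
    (μh : Fin p → ℝ) (γh : Fin K → Fin p → ℝ)
    (hmin : ∀ (μ' : Fin p → ℝ) (γ' : Fin K → Fin p → ℝ),
      (∑ k, l2sq (fun i => y k i - (X k).mulVec (μh + γh k) i) / (2 * (n : ℝ))
          + lam1 * l1 μh + ∑ k, lam2 k * l1 (γh k))
        ≤ (∑ k, l2sq (fun i => y k i - (X k).mulVec (μ' + γ' k) i) / (2 * (n : ℝ))
          + lam1 * l1 μ' + ∑ k, lam2 k * l1 (γ' k))) :
    ∀ j : Fin p, ∀ b : ℝ,
      |μh j| + ∑ k, τ k * |(μh j + γh k j) - μh j|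
        ≤ |b| + ∑ k, τ k * |(μh j + γh k j) - b| :=
  statement_14_general nk n X y τ lam1 hlam1 lam2 hlam2 μh γh hmin
end
end

section
/- Assume n_k = n/K and X^{(k)ᵀ}X^{(k)} = n_k·I_p for all k ∈ [K], and let τ₁,…,τ_K > 0. Let j ∉ J₀ be an index of a column of X₀ of form (A), i.e., X_{0,j} = (0ᵀ,…,0ᵀ, X^{(k₀)ᵀ}_{j₀}/τ_{k₀}, 0ᵀ,…,0ᵀ)ᵀ for some k₀ ∈ [K] and j₀ ∉ T*_{k₀} (a γ-block column with k₀ ∈ K*_{j₀}). Then ‖X_{0,j}ᵀ X_{0,J₀}(X_{0,J₀}ᵀX_{0,J₀})^{-1}‖₁ ≤ max_{j'∈S_{ℓ*}} max_{k∈K*_{j'}} (n_k/(τ_k·N*_{j'}))·(1 + Σ_{l∉K*_{j'}} τ_l). -/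
open scoped BigOperators Matrix
open Classical MeasureTheory ProbabilityTheory

noncomputable section

/-- N*_j = n·|K*_j|/K. -/
def Nstar {K p : ℕ} (n : ℕ) (β : Fin K → Fin p → ℝ) (βbar : Fin p → ℝ)
    (j : Fin p) : ℝ :=
  (n : ℝ) * (Nat.card {k : Fin K // β k j = βbar j}) / K

/-!
With orthogonal designs of equal size in every stratum, the Gram matrix of `X0` only couples
coordinates of the same feature, so the normal equations `X_{0,J₀}ᵀ X_{0,J₀} w = X_{0,J₀}ᵀ X_{0,j}`
are solved inside the coordinates of feature `j₀`: `w` puts `c = n_{k₀} / (τ_{k₀} N*_{j₀})` on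
`β̄_{j₀}` and `-c τ_l` on `γ_{l,j₀}` for every `l ∉ K*_{j₀}` (and `w = 0` when `β̄_{j₀} = 0`).
Its `ℓ₁` norm `c (1 + ∑_{l ∉ K*_{j₀}} τ_l)` is one of the values over which the maximum is taken.
-/

open Matrix

section SupportedSolve

variable {κ : Type*} [Fintype κ] {P : κ → Prop} [DecidablePred P]

lemma sum_subtype_eq_sum_of_support {M : Type*} [AddCommMonoid M] {f : κ → M}
    (hf : ∀ c, ¬ P c → f c = 0) : ∑ a : {c // P c}, f a = ∑ c, f c := by
  rw [← Finset.sum_subtype (Finset.univ.filter P) (by simp) f,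
    Finset.sum_filter_of_ne fun c _ h => by_contra fun hc => h (hf c hc)]

lemma vecMul_inv_submatrix_eq_of_support [DecidableEq κ] {R : Type*} [CommRing R]
    {G : Matrix κ κ R}
    (hG : IsUnit (G.submatrix (Subtype.val : {c // P c} → κ) (Subtype.val : {c // P c} → κ)))
    {w v : κ → R} (hw : ∀ c, ¬ P c → w c = 0) (hwv : ∀ c, P c → (w ᵥ* G) c = v c) :
    (fun a : {c // P c} => v a) ᵥ* (G.submatrix Subtype.val Subtype.val)⁻¹
      = fun a : {c // P c} => w a := by
  have hsolve : (fun a : {c // P c} => w a) ᵥ* G.submatrix Subtype.val Subtype.val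
      = fun a : {c // P c} => v a := by
    funext a
    rw [← hwv a a.2]
    exact sum_subtype_eq_sum_of_support (f := fun c => w c * G c a) fun c hc => by
      rw [hw c hc, zero_mul]
  rw [← hsolve, vecMul_vecMul, mul_nonsing_inv _ ((isUnit_iff_isUnit_det _).mp hG), vecMul_one]

lemma l1_subtype_eq_of_support {w : κ → ℝ} (hw : ∀ c, ¬ P c → w c = 0) :
    l1 (fun a : {c // P c} => w a) = l1 w :=
  sum_subtype_eq_sum_of_support (f := fun c => |w c|) fun c hc => by rw [hw c hc, abs_zero]

end SupportedSolve

lemma gramOn_eq_submatrix {ι κ : Type*} [Fintype ι] (M : Matrix ι κ ℝ) (θ : κ → ℝ) :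
    gramOn M θ = (Mᵀ * M).submatrix Subtype.val Subtype.val := by
  ext a b
  simp [gramOn, mul_apply]

lemma sum_mul_of_transpose_mul_self_eq_smul_one {m n R : Type*} [Fintype m] [DecidableEq n]
    [CommSemiring R] {A : Matrix m n R} {c : R} (hA : Aᵀ * A = c • 1) (j j' : n) :
    ∑ i, A i j * A i j' = if j = j' then c else 0 := by
  simpa [mul_apply, one_apply] using congrFun₂ hA j j'

def featureVec {K p : ℕ} (j0 : Fin p) (b : ℝ) (g : Fin K → ℝ) : Fin p ⊕ Fin K × Fin p → ℝ :=
  Sum.elim (Pi.single j0 b) fun q => if q.2 = j0 then g q.1 else 0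

section FeatureVec

variable {K p : ℕ} (j0 : Fin p)

lemma l1_featureVec (b : ℝ) (g : Fin K → ℝ) : l1 (featureVec j0 b g) = |b| + ∑ k, |g k| := by
  simp [l1, featureVec, Fintype.sum_sum_type, Fintype.sum_prod_type, Pi.single_apply, apply_ite]

lemma featureVec_apply_eq_of_theta0_ne_zero {β : Fin K → Fin p → ℝ} {βbar : Fin p → ℝ}
    {τ : Fin K → ℝ} (hτ : ∀ k, τ k ≠ 0) {b b' : ℝ} {g g' : Fin K → ℝ}
    (hb : βbar j0 ≠ 0 → b = b') (hg : ∀ k, β k j0 ≠ βbar j0 → g k = g' k)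
    {d : Fin p ⊕ Fin K × Fin p} (hd : theta0 β βbar τ d ≠ 0) :
    featureVec j0 b g d = featureVec j0 b' g' d := by
  rcases d with j | ⟨k, j⟩
  · by_cases hj : j = j0
    · subst hj
      simp [featureVec, hb hd]
    · simp [featureVec, hj]
  · by_cases hj : j = j0
    · subst hj
      have hk : β k j ≠ βbar j := by simpa [theta0, hτ k, sub_eq_zero] using hd
      simp [featureVec, hg k hk]
    · simp [featureVec, hj]

lemma featureVec_eq_zero_of_theta0_eq_zero {β : Fin K → Fin p → ℝ} {βbar : Fin p → ℝ}
    {τ : Fin K → ℝ} (hτ : ∀ k, τ k ≠ 0) {b : ℝ} {g : Fin K → ℝ}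
    (hb : βbar j0 = 0 → b = 0) (hg : ∀ k, β k j0 = βbar j0 → g k = 0)
    {d : Fin p ⊕ Fin K × Fin p} (hd : theta0 β βbar τ d = 0) : featureVec j0 b g d = 0 := by
  rcases d with j | ⟨k, j⟩
  · by_cases hj : j = j0
    · subst hj
      simp [featureVec, hb hd]
    · simp [featureVec, hj]
  · by_cases hj : j = j0
    · subst hj
      have hk : β k j = βbar j := by simpa [theta0, hτ k, sub_eq_zero] using hd
      simp [featureVec, hg k hk]
    · simp [featureVec, hj]

end FeatureVec

section X0

variable {K p : ℕ} {nk : Fin K → ℕ} (X : (k : Fin K) → Matrix (Fin (nk k)) (Fin p) ℝ)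
  (τ : Fin K → ℝ) (j0 : Fin p)

lemma X0_mulVec_featureVec (b : ℝ) (g : Fin K → ℝ) :
    X0 nk X τ *ᵥ featureVec j0 b g = fun r => (b + g r.1 / τ r.1) * X r.1 r.2 j0 := by
  funext r
  simp [mulVec, dotProduct, X0, featureVec, Fintype.sum_sum_type, Fintype.sum_prod_type,
    Pi.single_apply, ite_mul, mul_ite]
  ring

lemma X0_col_inr (k0 : Fin K) :
    (fun r => X0 nk X τ r (.inr (k0, j0)))
      = fun r => (Pi.single k0 (τ k0)⁻¹ : Fin K → ℝ) r.1 * X r.1 r.2 j0 := by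
  funext r
  by_cases h : r.1 = k0
  · simp [X0, h, div_eq_inv_mul]
  · simp [X0, h]

lemma stratumScaledCol_vecMul_X0 (hortho : ∀ k, (X k)ᵀ * X k = (nk k : ℝ) • 1) (a : Fin K → ℝ) :
    (fun r : (k : Fin K) × Fin (nk k) => a r.1 * X r.1 r.2 j0) ᵥ* X0 nk X τ
      = featureVec j0 (∑ k, a k * nk k) fun k => a k * nk k / τ k := by
  have hcol := fun k => sum_mul_of_transpose_mul_self_eq_smul_one (hortho k)
  funext d
  rcases d with j | ⟨k, j⟩
  · simp only [vecMul, dotProduct, Fintype.sum_sigma, X0, Sum.elim_inl, mul_assoc,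
      ← Finset.mul_sum, hcol]
    by_cases hj : j = j0
    · subst hj
      simp [featureVec]
    · simp [featureVec, hj, Ne.symm hj]
  · simp only [vecMul, dotProduct, Fintype.sum_sigma, X0, Sum.elim_inr]
    rw [Fintype.sum_eq_single k fun k' hk' => by simp [hk']]
    simp only [if_true, mul_div_assoc', mul_assoc, ← Finset.mul_sum, ← Finset.sum_div, hcol]
    by_cases hj : j = j0
    · subst hj
      simp [featureVec, mul_div_assoc]
    · simp [featureVec, hj, Ne.symm hj]

lemma inner_X0_col_inr (hortho : ∀ k, (X k)ᵀ * X k = (nk k : ℝ) • 1) (k0 : Fin K)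
    (d : Fin p ⊕ Fin K × Fin p) :
    ∑ r, X0 nk X τ r (.inr (k0, j0)) * X0 nk X τ r d
      = featureVec j0 (nk k0 / τ k0) (Pi.single k0 (nk k0 / τ k0 ^ 2)) d := by
  have hcoef : (∑ k, (Pi.single k0 (τ k0)⁻¹ : Fin K → ℝ) k * nk k = nk k0 / τ k0) ∧
      (fun k => (Pi.single k0 (τ k0)⁻¹ : Fin K → ℝ) k * nk k / τ k)
        = Pi.single k0 (nk k0 / τ k0 ^ 2) := by
    refine ⟨by simp [Pi.single_apply, div_eq_inv_mul], funext fun k => ?_⟩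
    by_cases h : k = k0
    · subst h
      simp only [Pi.single_eq_same]
      ring
    · simp [h]
  have := stratumScaledCol_vecMul_X0 X τ j0 hortho (Pi.single k0 (τ k0)⁻¹)
  rw [← X0_col_inr, hcoef.1, hcoef.2] at this
  exact congrFun this d

lemma featureVec_vecMul_gram (hortho : ∀ k, (X k)ᵀ * X k = (nk k : ℝ) • 1) (b : ℝ)
    (g : Fin K → ℝ) :
    featureVec j0 b g ᵥ* ((X0 nk X τ)ᵀ * X0 nk X τ)
      = featureVec j0 (∑ k, (b + g k / τ k) * nk k) fun k => (b + g k / τ k) * nk k / τ k := by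
  rw [← vecMul_mulVec, X0_mulVec_featureVec]
  exact stratumScaledCol_vecMul_X0 X τ j0 hortho fun k => b + g k / τ k

end X0

section ModeVec

variable {K p : ℕ} {nk : Fin K → ℕ} {n : ℕ} (β : Fin K → Fin p → ℝ) (βbar : Fin p → ℝ)
  (τ : Fin K → ℝ) (j0 : Fin p)

lemma sum_filter_nk_eq_Nstar (hbal : ∀ k, K * nk k = n) :
    ∑ k ∈ Finset.univ.filter (fun k => β k j0 = βbar j0), (nk k : ℝ) = Nstar n β βbar j0 := by
  have hnk : ∀ k, (nk k : ℝ) = n / K := fun k => by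
    have hK : (K : ℝ) ≠ 0 := by exact_mod_cast k.pos.ne'
    rw [← hbal k]
    push_cast
    field_simp
  simp only [hnk, Finset.sum_const, nsmul_eq_mul, Nstar, Nat.card_eq_fintype_card,
    Fintype.card_subtype]
  ring

lemma nk_le_Nstar (hbal : ∀ k, K * nk k = n) {k0 : Fin K} (hk0 : β k0 j0 = βbar j0) :
    (nk k0 : ℝ) ≤ Nstar n β βbar j0 := by
  rw [← sum_filter_nk_eq_Nstar β βbar j0 hbal]
  exact Finset.single_le_sum (fun k _ => Nat.cast_nonneg _) (by simp [hk0])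

lemma div_mul_Nstar_mul_Nstar (hbal : ∀ k, K * nk k = n) {k0 : Fin K}
    (hk0 : β k0 j0 = βbar j0) (a : ℝ) :
    (nk k0 : ℝ) / (a * Nstar n β βbar j0) * Nstar n β βbar j0 = nk k0 / a := by
  rw [div_mul_eq_div_div]
  refine div_mul_cancel_of_imp fun h => ?_
  rw [le_antisymm (h ▸ nk_le_Nstar β βbar j0 hbal hk0) (Nat.cast_nonneg _), zero_div]

/-- The entries `γ_{k,j0} = -c τ_k` cancel `β̄_{j0} = c` in the strata outside `K*_{j0}`. -/
def modeVec (c : ℝ) : Fin p ⊕ Fin K × Fin p → ℝ :=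
  featureVec j0 c fun k => if β k j0 = βbar j0 then 0 else -(c * τ k)

lemma l1_modeVec (hτ : ∀ k, 0 < τ k) {c : ℝ} (hc : 0 ≤ c) :
    l1 (modeVec β βbar τ j0 c)
      = c * (1 + ∑ l ∈ Finset.univ.filter fun l => β l j0 ≠ βbar j0, τ l) := by
  rw [modeVec, l1_featureVec, abs_of_nonneg hc, mul_add, mul_one, Finset.mul_sum,
    Finset.sum_filter]
  congr 1
  refine Finset.sum_congr rfl fun k _ => ?_
  by_cases hk : β k j0 = βbar j0
  · simp [hk]
  · simp [hk, abs_of_nonneg hc, abs_of_pos (hτ k)]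

lemma modeVec_vecMul_gram (X : (k : Fin K) → Matrix (Fin (nk k)) (Fin p) ℝ)
    (hortho : ∀ k, (X k)ᵀ * X k = (nk k : ℝ) • 1) (hbal : ∀ k, K * nk k = n)
    (hτ : ∀ k, τ k ≠ 0) (c : ℝ) :
    modeVec β βbar τ j0 c ᵥ* ((X0 nk X τ)ᵀ * X0 nk X τ)
      = featureVec j0 (c * Nstar n β βbar j0)
          fun k => if β k j0 = βbar j0 then c * nk k / τ k else 0 := by
  have hcoef : ∀ k, c + (if β k j0 = βbar j0 then 0 else -(c * τ k)) / τ k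
      = if β k j0 = βbar j0 then c else 0 := fun k => by
    split_ifs <;> simp [neg_div, mul_div_cancel_right₀ _ (hτ k)]
  rw [modeVec, featureVec_vecMul_gram X τ j0 hortho]
  simp only [hcoef]
  simp only [ite_mul, zero_mul, ite_div, zero_div, ← Finset.sum_filter, ← Finset.mul_sum,
    sum_filter_nk_eq_Nstar β βbar j0 hbal]

end ModeVec

lemma l1_vecMul_inv_gramOn_X0_col {K p : ℕ} (nk : Fin K → ℕ) (n : ℕ)
    (hbal : ∀ k, K * nk k = n) (X : (k : Fin K) → Matrix (Fin (nk k)) (Fin p) ℝ)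
    (hortho : ∀ k, (X k)ᵀ * X k = (nk k : ℝ) • 1)
    (β : Fin K → Fin p → ℝ) (βbar : Fin p → ℝ) (τ : Fin K → ℝ) (hτ : ∀ k, 0 < τ k)
    (hGram : IsUnit (gramOn (X0 nk X τ) (theta0 β βbar τ)))
    (k0 : Fin K) (j0 : Fin p) (hk0 : β k0 j0 = βbar j0) {c : ℝ} (hc : 0 ≤ c)
    (hc_zero : βbar j0 = 0 → c = 0)
    (hc_Nstar : βbar j0 ≠ 0 → c * Nstar n β βbar j0 = nk k0 / τ k0) :
    l1 (vecMul
        (fun a : {c // theta0 β βbar τ c ≠ 0} =>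
          ∑ r, X0 nk X τ r (Sum.inr (k0, j0)) * X0 nk X τ r a.val)
        (gramOn (X0 nk X τ) (theta0 β βbar τ))⁻¹)
      = c * (1 + ∑ l ∈ Finset.univ.filter fun l => β l j0 ≠ βbar j0, τ l) := by
  have hτ0 : ∀ k, τ k ≠ 0 := fun k => (hτ k).ne'
  have hsupp : ∀ d, ¬ theta0 β βbar τ d ≠ 0 → modeVec β βbar τ j0 c d = 0 := fun d hd =>
    featureVec_eq_zero_of_theta0_eq_zero j0 hτ0 hc_zero (fun k hk => if_pos hk) (not_not.mp hd)
  have hsolve : ∀ d, theta0 β βbar τ d ≠ 0 →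
      (modeVec β βbar τ j0 c ᵥ* ((X0 nk X τ)ᵀ * X0 nk X τ)) d
        = ∑ r, X0 nk X τ r (.inr (k0, j0)) * X0 nk X τ r d := fun d hd => by
    rw [modeVec_vecMul_gram β βbar τ j0 X hortho hbal hτ0, inner_X0_col_inr X τ j0 hortho]
    refine featureVec_apply_eq_of_theta0_ne_zero j0 hτ0 hc_Nstar (fun k hk => ?_) hd
    have hkk0 : k ≠ k0 := fun h => hk (h ▸ hk0)
    simp [hk, hkk0]
  rw [gramOn_eq_submatrix] at hGram ⊢
  rw [vecMul_inv_submatrix_eq_of_support hGram hsupp hsolve, l1_subtype_eq_of_support hsupp,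
    l1_modeVec β βbar τ j0 hτ hc]

section IcBound

variable {K p : ℕ} (nk : Fin K → ℕ) (n : ℕ) (β : Fin K → Fin p → ℝ) (βbar : Fin p → ℝ)
  (τ : Fin K → ℝ)

def icBoundSet : Set ℝ :=
  {x : ℝ | ∃ j' : Fin p, βbar j' ≠ 0 ∧ ∃ k : Fin K, β k j' = βbar j' ∧
    x = (nk k : ℝ) / (τ k * Nstar n β βbar j')
      * (1 + ∑ l ∈ Finset.univ.filter fun l => β l j' ≠ βbar j', τ l)}

lemma sSup_icBoundSet_nonneg (hτ : ∀ k, 0 < τ k) : 0 ≤ sSup (icBoundSet nk n β βbar τ) := by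
  refine Real.sSup_nonneg ?_
  rintro x ⟨j', -, k, -, rfl⟩
  have hN : 0 ≤ Nstar n β βbar j' := by unfold Nstar; positivity
  have hτ_sum : 0 ≤ ∑ l ∈ Finset.univ.filter fun l => β l j' ≠ βbar j', τ l :=
    Finset.sum_nonneg fun l _ => (hτ l).le
  have := (hτ k).le
  positivity

lemma le_sSup_icBoundSet {j0 : Fin p} (hb0 : βbar j0 ≠ 0) {k0 : Fin K} (hk0 : β k0 j0 = βbar j0) :
    (nk k0 : ℝ) / (τ k0 * Nstar n β βbar j0)
        * (1 + ∑ l ∈ Finset.univ.filter fun l => β l j0 ≠ βbar j0, τ l)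
      ≤ sSup (icBoundSet nk n β βbar τ) := by
  refine le_csSup ?_ ⟨j0, hb0, k0, hk0, rfl⟩
  exact (Set.finite_range fun q : Fin p × Fin K => (nk q.2 : ℝ) / (τ q.2 * Nstar n β βbar q.1)
    * (1 + ∑ l ∈ Finset.univ.filter fun l => β l q.1 ≠ βbar q.1, τ l)).bddAbove.mono
      fun _ ⟨j', _, k, _, hx⟩ => Set.mem_range.mpr ⟨(j', k), hx.symm⟩

end IcBound

theorem statement_16_general {K p : ℕ}
    (nk : Fin K → ℕ) (n : ℕ)
    (hbal : ∀ k, K * nk k = n)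
    (X : (k : Fin K) → Matrix (Fin (nk k)) (Fin p) ℝ)
    (hortho : ∀ k, (X k)ᵀ * X k = (nk k : ℝ) • (1 : Matrix (Fin p) (Fin p) ℝ))
    (β : Fin K → Fin p → ℝ) (βbar : Fin p → ℝ)
    (τ : Fin K → ℝ) (hτ : ∀ k, 0 < τ k)
    (hGram : IsUnit (gramOn (X0 nk X τ) (theta0 β βbar τ)))
    (k0 : Fin K) (j0 : Fin p) (hk0 : β k0 j0 = βbar j0) :
    l1 (Matrix.vecMul
        (fun a : {c // theta0 β βbar τ c ≠ 0} =>
          ∑ r, X0 nk X τ r (Sum.inr (k0, j0)) * X0 nk X τ r a.val)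
        (gramOn (X0 nk X τ) (theta0 β βbar τ))⁻¹)
      ≤ sSup {x : ℝ | ∃ j' : Fin p, βbar j' ≠ 0 ∧ ∃ k : Fin K, β k j' = βbar j' ∧
          x = (nk k : ℝ) / (τ k * Nstar n β βbar j')
            * (1 + ∑ l ∈ Finset.univ.filter fun l => β l j' ≠ βbar j', τ l)} := by
  by_cases hb0 : βbar j0 = 0
  · rw [l1_vecMul_inv_gramOn_X0_col nk n hbal X hortho β βbar τ hτ hGram k0 j0 hk0 le_rfl
      (fun _ => rfl) (absurd hb0), zero_mul]
    exact sSup_icBoundSet_nonneg nk n β βbar τ hτ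
  · have hN := nk_le_Nstar β βbar j0 hbal hk0
    have hc : 0 ≤ (nk k0 : ℝ) / (τ k0 * Nstar n β βbar j0) :=
      div_nonneg (Nat.cast_nonneg _) (mul_nonneg (hτ k0).le ((Nat.cast_nonneg _).trans hN))
    rw [l1_vecMul_inv_gramOn_X0_col nk n hbal X hortho β βbar τ hτ hGram k0 j0 hk0 hc
      (absurd · hb0) fun _ => div_mul_Nstar_mul_Nstar β βbar j0 hbal hk0 _]
    exact le_sSup_icBoundSet nk n β βbar τ hb0 hk0

/-- bound on ‖𝒳₀ⱼᵀ𝒳₀_{J₀}(𝒳₀_{J₀}ᵀ𝒳₀_{J₀})⁻¹‖₁ for a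
column of form (A), i.e. the γ-block column (k₀, j₀) with k₀ ∈ K*_{j₀}. -/
theorem statement_16 {K p : ℕ} (hK : 0 < K)
    (nk : Fin K → ℕ) (n : ℕ) (hn : n = ∑ k, nk k)
    (hbal : ∀ k, K * nk k = n)
    (X : (k : Fin K) → Matrix (Fin (nk k)) (Fin p) ℝ)
    (hortho : ∀ k, (X k)ᵀ * X k = (nk k : ℝ) • (1 : Matrix (Fin p) (Fin p) ℝ))
    (β : Fin K → Fin p → ℝ) (βbar : Fin p → ℝ) (hmode : IsUniqueMode β βbar)
    (τ : Fin K → ℝ) (hτ : ∀ k, 0 < τ k)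
    (hGram : IsUnit (gramOn (X0 nk X τ) (theta0 β βbar τ)))
    (k0 : Fin K) (j0 : Fin p) (hk0 : β k0 j0 = βbar j0) :
    l1 (Matrix.vecMul
        (fun a : {c // theta0 β βbar τ c ≠ 0} =>
          ∑ r, X0 nk X τ r (Sum.inr (k0, j0)) * X0 nk X τ r a.val)
        (gramOn (X0 nk X τ) (theta0 β βbar τ))⁻¹)
      ≤ sSup {x : ℝ | ∃ j' : Fin p, βbar j' ≠ 0 ∧ ∃ k : Fin K, β k j' = βbar j' ∧
          x = (nk k : ℝ) / (τ k * Nstar n β βbar j')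
            * (1 + ∑ l ∈ Finset.univ.filter fun l => β l j' ≠ βbar j', τ l)} :=
  statement_16_general nk n hbal X hortho β βbar τ hτ hGram k0 j0 hk0

end
end

section
/- Assume n_k = n/K and X^{(k)ᵀ}X^{(k)} = n_k·I_p for all k ∈ [K], and let τ₁,…,τ_K > 0. Let j ∉ J₀ be an index of a column of X₀ of form (B), i.e., X_{0,j} = (X^{(1)ᵀ}_{j₀},…,X^{(K)ᵀ}_{j₀})ᵀ for some j₀ ∉ S_{ℓ*} (a μ-block column). Then ‖X_{0,j}ᵀ X_{0,J₀}(X_{0,J₀}ᵀX_{0,J₀})^{-1}‖₁ ≤ max_{j'∉S_{ℓ*}} Σ_{l∉K*_{j'}} τ_l. -/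
open scoped BigOperators Matrix
open Classical MeasureTheory ProbabilityTheory

noncomputable section

section helpers

variable {K p : ℕ} {nk : Fin K → ℕ} {X : (k : Fin K) → Matrix (Fin (nk k)) (Fin p) ℝ}
  {τ : Fin K → ℝ}

lemma col_dot (hortho : ∀ k, (X k)ᵀ * X k = (nk k : ℝ) • (1 : Matrix (Fin p) (Fin p) ℝ))
    (k : Fin K) (j j' : Fin p) :
    ∑ i, X k i j * X k i j' = if j = j' then (nk k : ℝ) else 0 := by
  have h := congrFun (congrFun (hortho k) j) j'
  simp only [Matrix.mul_apply, Matrix.transpose_apply, Matrix.smul_apply, Matrix.one_apply,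
    smul_eq_mul, mul_ite, mul_one, mul_zero] at h
  exact h

lemma sigma_sum (f : (k : Fin K) × Fin (nk k) → ℝ) :
    ∑ r : (k : Fin K) × Fin (nk k), f r = ∑ k, ∑ i, f ⟨k, i⟩ := by
  rw [← Finset.univ_sigma_univ, Finset.sum_sigma]

lemma dot_inl_inl (hortho : ∀ k, (X k)ᵀ * X k = (nk k : ℝ) • (1 : Matrix (Fin p) (Fin p) ℝ))
    (j j' : Fin p) :
    ∑ r : (k : Fin K) × Fin (nk k), X0 nk X τ r (Sum.inl j) * X0 nk X τ r (Sum.inl j')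
      = if j = j' then (∑ k, (nk k : ℝ)) else 0 := by
  rw [sigma_sum]
  simp only [X0, Sum.elim_inl]
  rw [Finset.sum_congr rfl fun k _ => col_dot hortho k j j']
  by_cases h : j = j' <;> simp [h]

lemma dot_inl_inr (hortho : ∀ k, (X k)ᵀ * X k = (nk k : ℝ) • (1 : Matrix (Fin p) (Fin p) ℝ))
    (j : Fin p) (q : Fin K × Fin p) :
    ∑ r : (k : Fin K) × Fin (nk k), X0 nk X τ r (Sum.inl j) * X0 nk X τ r (Sum.inr q)
      = if j = q.2 then (nk q.1 : ℝ) / τ q.1 else 0 := by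
  rw [sigma_sum]
  have hk : ∀ k : Fin K, (∑ i, X0 nk X τ ⟨k, i⟩ (Sum.inl j) * X0 nk X τ ⟨k, i⟩ (Sum.inr q))
      = if k = q.1 then (if j = q.2 then (nk q.1 : ℝ) / τ q.1 else 0) else 0 := by
    intro k
    by_cases h : k = q.1
    · subst h
      simp only [X0, Sum.elim_inl, Sum.elim_inr, eq_self_iff_true, if_true, ← mul_div_assoc]
      rw [← Finset.sum_div, col_dot hortho]
      split_ifs <;> simp
    · simp [X0, h]
  rw [Finset.sum_congr rfl fun k _ => hk k]
  simp

lemma dot_inr_inr (hortho : ∀ k, (X k)ᵀ * X k = (nk k : ℝ) • (1 : Matrix (Fin p) (Fin p) ℝ))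
    (q q' : Fin K × Fin p) :
    ∑ r : (k : Fin K) × Fin (nk k), X0 nk X τ r (Sum.inr q) * X0 nk X τ r (Sum.inr q')
      = if q = q' then (nk q.1 : ℝ) / (τ q.1 * τ q.1) else 0 := by
  rw [sigma_sum]
  have hk : ∀ k : Fin K, (∑ i, X0 nk X τ ⟨k, i⟩ (Sum.inr q) * X0 nk X τ ⟨k, i⟩ (Sum.inr q'))
      = if k = q.1 ∧ k = q'.1 then
          (if q.2 = q'.2 then (nk k : ℝ) else 0) / (τ q.1 * τ q'.1) else 0 := by
    intro k
    by_cases h1 : k = q.1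
    · by_cases h2 : k = q'.1
      · rw [if_pos ⟨h1, h2⟩]
        have e : ∀ i, X0 nk X τ ⟨k, i⟩ (Sum.inr q) * X0 nk X τ ⟨k, i⟩ (Sum.inr q')
            = (X k i q.2 * X k i q'.2) / (τ q.1 * τ q'.1) := by
          intro i
          simp only [X0, Sum.elim_inr, if_pos h1, if_pos h2]
          ring
        rw [Finset.sum_congr rfl fun i _ => e i, ← Finset.sum_div, col_dot hortho]
      · rw [if_neg (fun h => h2 h.2)]
        refine Finset.sum_eq_zero fun i _ => ?_
        simp [X0, h2]
    · rw [if_neg (fun h => h1 h.1)]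
      refine Finset.sum_eq_zero fun i _ => ?_
      simp [X0, h1]
  rw [Finset.sum_congr rfl fun k _ => hk k]
  by_cases hq : q.1 = q'.1
  · have : ∀ k : Fin K, (k = q.1 ∧ k = q'.1) ↔ k = q.1 := by
      intro k; constructor
      · exact fun h => h.1
      · exact fun h => ⟨h, h.trans hq⟩
    simp only [this]
    rw [Finset.sum_ite_eq' Finset.univ q.1]
    simp only [Finset.mem_univ, if_true, ← hq]
    by_cases h2 : q.2 = q'.2
    · have : q = q' := Prod.ext hq h2
      simp [this, hq]
    · have : q ≠ q' := fun h => h2 (by rw [h])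
      simp [h2, this]
  · have : q ≠ q' := fun h => hq (by rw [h])
    rw [if_neg this]
    refine Finset.sum_eq_zero fun k _ => ?_
    rw [if_neg (fun h => hq (h.1.symm.trans h.2))]

end helpers

/-- bound on ‖𝒳₀ⱼᵀ𝒳₀_{J₀}(𝒳₀_{J₀}ᵀ𝒳₀_{J₀})⁻¹‖₁ for a
column of form (B), i.e. a μ-block column j₀ with j₀ ∉ S_{ℓ*}. -/
theorem statement_17 {K p : ℕ} (hK : 0 < K)
    (nk : Fin K → ℕ) (n : ℕ) (hn : n = ∑ k, nk k)
    (hbal : ∀ k, K * nk k = n)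
    (X : (k : Fin K) → Matrix (Fin (nk k)) (Fin p) ℝ)
    (hortho : ∀ k, (X k)ᵀ * X k = (nk k : ℝ) • (1 : Matrix (Fin p) (Fin p) ℝ))
    (β : Fin K → Fin p → ℝ) (βbar : Fin p → ℝ) (hmode : IsUniqueMode β βbar)
    (τ : Fin K → ℝ) (hτ : ∀ k, 0 < τ k)
    (hGram : IsUnit (gramOn (X0 nk X τ) (theta0 β βbar τ)))
    (j0 : Fin p) (hj0 : βbar j0 = 0) :
    l1 (Matrix.vecMul
        (fun a : {c // theta0 β βbar τ c ≠ 0} =>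
          ∑ r, X0 nk X τ r (Sum.inl j0) * X0 nk X τ r a.val)
        (gramOn (X0 nk X τ) (theta0 β βbar τ))⁻¹)
      ≤ sSup {x : ℝ | ∃ j' : Fin p, βbar j' = 0 ∧
          x = ∑ l ∈ Finset.univ.filter fun l => β l j' ≠ βbar j', τ l} := by
  classical
  set θ := theta0 β βbar τ with hθdef
  set M := X0 nk X τ with hMdef
  set G := gramOn M θ with hGdef
  have hτ' : ∀ k, τ k ≠ 0 := fun k => (hτ k).ne'
  set w' : (Fin p ⊕ Fin K × Fin p) → ℝ :=
    Sum.elim (fun _ : Fin p => (0:ℝ))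
      (fun q : Fin K × Fin p => if q.2 = j0 then τ q.1 else 0) with hw'def
  set w : {c // θ c ≠ 0} → ℝ := fun a => w' a.val with hwdef
  have hGinv : G * G⁻¹ = 1 :=
    Matrix.mul_nonsing_inv _ ((Matrix.isUnit_iff_isUnit_det _).mp hGram)
  -- the key identity: the inner-product vector equals w ᵥ* G
  have key : (fun a : {c // θ c ≠ 0} => ∑ r, M r (Sum.inl j0) * M r a.val)
      = Matrix.vecMul w G := by
    funext a
    show _ = ∑ b : {c // θ c ≠ 0}, w b * G b a
    have e1 : ∀ b : {c // θ c ≠ 0}, w b * G b a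
        = (if θ b.val ≠ 0 then w' b.val else 0) * ∑ r, M r b.val * M r a.val := by
      intro b; rw [if_pos b.2]; rfl
    have hsub : ∑ b : {c // θ c ≠ 0}, w b * G b a
        = ∑ c : Fin p ⊕ Fin K × Fin p,
            (if θ c ≠ 0 then w' c else 0) * ∑ r, M r c * M r a.val := by
      rw [Finset.sum_congr rfl fun b _ => e1 b,
        ← Finset.sum_subtype (Finset.univ.filter fun c => θ c ≠ 0) (fun c => by simp)
          (fun c => (if θ c ≠ 0 then w' c else 0) * ∑ r, M r c * M r a.val)]
      refine Finset.sum_filter_of_ne fun c _ hcc => ?_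
      by_contra h
      simp [h] at hcc
    rw [hsub, Fintype.sum_sum_type]
    have h1 : ∑ j : Fin p, (if θ (Sum.inl j) ≠ 0 then w' (Sum.inl j) else 0)
        * ∑ r, M r (Sum.inl j) * M r a.val = 0 := by
      simp [hw'def]
    rw [h1, zero_add]
    obtain ⟨c, hc⟩ := a
    cases c with
    | inl j =>
      have hjne : j ≠ j0 := by
        intro h
        apply hc
        simp [hθdef, theta0, h, hj0]
      have hd : ∀ q : Fin K × Fin p,
          (∑ r, M r (Sum.inr q) * M r (Sum.inl j))
            = if j = q.2 then (nk q.1 : ℝ) / τ q.1 else 0 := by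
        intro q
        rw [show (∑ r, M r (Sum.inr q) * M r (Sum.inl j))
            = ∑ r, M r (Sum.inl j) * M r (Sum.inr q) from
          Finset.sum_congr rfl fun r _ => mul_comm _ _]
        exact dot_inl_inr hortho j q
      simp only [hd]
      rw [show (∑ r, M r (Sum.inl j0) * M r (Sum.inl j))
          = if j0 = j then (∑ k, (nk k : ℝ)) else 0 from dot_inl_inl hortho j0 j,
        if_neg (fun h => hjne h.symm)]
      refine (Finset.sum_eq_zero fun q _ => ?_).symm
      rcases eq_or_ne q.2 j0 with h | h
      · rw [if_neg (fun hh : j = q.2 => hjne (hh.trans h)), mul_zero]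
      · simp [hw'def, h]
    | inr q' =>
      have hd : ∀ q : Fin K × Fin p,
          (∑ r, M r (Sum.inr q) * M r (Sum.inr q'))
            = if q = q' then (nk q.1 : ℝ) / (τ q.1 * τ q.1) else 0 := fun q =>
        dot_inr_inr hortho q q'
      simp only [hd, mul_ite, mul_zero]
      rw [Finset.sum_ite_eq' Finset.univ q'
        (fun q => (if θ (Sum.inr q) ≠ 0 then w' (Sum.inr q) else 0)
          * ((nk q.1 : ℝ) / (τ q.1 * τ q.1))),
        if_pos (Finset.mem_univ q'), if_pos hc,
        show (∑ r, M r (Sum.inl j0) * M r (Sum.inr q'))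
          = if j0 = q'.2 then (nk q'.1 : ℝ) / τ q'.1 else 0 from dot_inl_inr hortho j0 q',
        hw'def]
      simp only [Sum.elim_inr]
      rcases eq_or_ne q'.2 j0 with h | h
      · rw [if_pos h.symm, if_pos h, ← mul_div_assoc, mul_div_mul_left _ _ (hτ' q'.1)]
      · rw [if_neg (fun hh => h hh.symm), if_neg h, zero_mul]
  have hl1 : l1 w = ∑ l ∈ Finset.univ.filter fun l => β l j0 ≠ βbar j0, τ l := by
    rw [l1]
    rw [show (∑ b : {c // θ c ≠ 0}, |w b|) = ∑ b : {c // θ c ≠ 0}, |w' b.val| from rfl,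
      ← Finset.sum_subtype (Finset.univ.filter fun c => θ c ≠ 0) (fun c => by simp)
        (fun c => |w' c|),
      Finset.sum_filter, Fintype.sum_sum_type]
    have h1 : ∑ j : Fin p, (if θ (Sum.inl j) ≠ 0 then |w' (Sum.inl j)| else 0) = 0 := by
      simp [hw'def]
    rw [h1, zero_add, Fintype.sum_prod_type]
    have h2 : ∀ k : Fin K, ∀ j : Fin p,
        (if θ (Sum.inr (k, j)) ≠ 0 then |w' (Sum.inr (k, j))| else 0)
        = if j = j0 then (if β k j0 ≠ βbar j0 then τ k else 0) else 0 := by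
      intro k j
      rcases eq_or_ne j j0 with h | h
      · subst h
        have hth : θ (Sum.inr (k, j)) ≠ 0 ↔ β k j ≠ βbar j := by
          rw [hθdef]
          simp only [theta0, Sum.elim_inr]
          rw [mul_ne_zero_iff]
          constructor
          · exact fun hh => sub_ne_zero.mp hh.2
          · exact fun hh => ⟨hτ' k, sub_ne_zero.mpr hh⟩
        rw [if_pos rfl, hw'def]
        simp only [Sum.elim_inr, eq_self_iff_true, if_true]
        rcases eq_or_ne (β k j) (βbar j) with hb | hb
        · rw [if_neg (fun hh => (hth.mp hh) hb), if_neg (fun hh => hh hb)]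
        · rw [if_pos (hth.mpr hb), if_pos hb, abs_of_pos (hτ k)]
      · simp [hw'def, h]
    simp only [h2]
    have h3 : ∀ k : Fin K, (∑ j : Fin p,
        if j = j0 then (if β k j0 ≠ βbar j0 then τ k else 0) else 0)
        = if β k j0 ≠ βbar j0 then τ k else 0 := by
      intro k
      rw [Finset.sum_ite_eq' Finset.univ j0
        (fun _ => if β k j0 ≠ βbar j0 then τ k else 0), if_pos (Finset.mem_univ j0)]
    rw [Finset.sum_congr rfl fun k _ => h3 k, ← Finset.sum_filter]
  have hmem : (∑ l ∈ Finset.univ.filter fun l => β l j0 ≠ βbar j0, τ l)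
      ∈ {x : ℝ | ∃ j' : Fin p, βbar j' = 0 ∧
          x = ∑ l ∈ Finset.univ.filter fun l => β l j' ≠ βbar j', τ l} := ⟨j0, hj0, rfl⟩
  have hbdd : BddAbove {x : ℝ | ∃ j' : Fin p, βbar j' = 0 ∧
      x = ∑ l ∈ Finset.univ.filter fun l => β l j' ≠ βbar j', τ l} := by
    refine ⟨∑ k, τ k, ?_⟩
    rintro x ⟨j', _, rfl⟩
    exact Finset.sum_le_sum_of_subset_of_nonneg (Finset.filter_subset _ _)
      (fun k _ _ => (hτ k).le)
  calc l1 (Matrix.vecMul (fun a : {c // θ c ≠ 0} => ∑ r, M r (Sum.inl j0) * M r a.val) G⁻¹)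
      = l1 w := by rw [key, Matrix.vecMul_vecMul, hGinv, Matrix.vecMul_one]
    _ ≤ _ := by rw [hl1]; exact le_csSup hbdd hmem


end
end
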